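/- Let Ω be a nonempty finite set and let D : Ω → ℝ. Fix ω₀ ∈ Ω and define p = (1/|Ω|) · |{ω ∈ Ω : |D(ω)| ≥ |D(ω₀)|}|. If ω₀ is drawn uniformly at random from Ω, then for every α ∈ [0,1], the probability that p ≤ α is at most α. -/
import Mathlib


open Finset

/-- Finite-sample validity of the randomization p-value: if `ω₀` is drawn
uniformly from a nonempty finite set `Ω`, then `P(p(ω₀) ≤ α) ≤ α`. -/
theorem randomization_pvalue_valid {Ω : Type*} [Fintype Ω] [Nonempty Ω]
    [DecidableEq Ω] (D : Ω → ℝ) (α : ℝ) (hα0 : 0 ≤ α) (hα1 : α ≤ 1) :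
    ((Finset.univ.filter (fun ω₀ : Ω =>
        ((Finset.univ.filter (fun ω : Ω => |D ω| ≥ |D ω₀|)).card : ℝ)
          / (Fintype.card Ω : ℝ) ≤ α)).card : ℝ) / (Fintype.card Ω : ℝ) ≤ α := by
  set A := Finset.univ.filter (fun ω₀ : Ω =>
      ((Finset.univ.filter (fun ω : Ω => |D ω| ≥ |D ω₀|)).card : ℝ)
        / (Fintype.card Ω : ℝ) ≤ α) with hA
  have hn : (0 : ℝ) < (Fintype.card Ω : ℝ) := by
    exact_mod_cast Fintype.card_pos
  rcases A.eq_empty_or_nonempty with h | h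
  · rw [h]; simpa using hα0
  · obtain ⟨ω₁, hω₁, hmin⟩ := A.exists_min_image (fun ω => |D ω|) h
    have hsub : A ⊆ Finset.univ.filter (fun ω : Ω => |D ω| ≥ |D ω₁|) := by
      intro x hx
      simp only [mem_filter, mem_univ, true_and]
      exact hmin x hx
    have hcard : (A.card : ℝ) ≤
        ((Finset.univ.filter (fun ω : Ω => |D ω| ≥ |D ω₁|)).card : ℝ) := by
      exact_mod_cast Finset.card_le_card hsub
    have h1 : ((Finset.univ.filter (fun ω : Ω => |D ω| ≥ |D ω₁|)).card : ℝ)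
        / (Fintype.card Ω : ℝ) ≤ α := by
      have := hω₁; rw [hA, mem_filter] at this; exact this.2
    calc (A.card : ℝ) / (Fintype.card Ω : ℝ)
        ≤ ((Finset.univ.filter (fun ω : Ω => |D ω| ≥ |D ω₁|)).card : ℝ)
          / (Fintype.card Ω : ℝ) := by
          gcongr
      _ ≤ α := h1
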